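/- arXiv:2507.08895 — 3 statements merged into one kernel-verified Lean document; each statement's English description precedes it below -/
import Mathlib

section
/- Let all parameters of the rabies model be nonnegative with C > 0, and let the constant controls satisfy u1,u2,u3,u4 ∈ [0,1], u1+u3 ≤ 1, u1+u2 ≤ 1. If (S_H,E_H,I_H,R_H,S_F,E_F,I_F,S_D,E_D,I_D,R_D,M) : ℝ → ℝ¹² is differentiable on [0,∞) and satisfies the rabies model system for all t ≥ 0, and all twelve components are nonnegative at t = 0, then all twelve components remain nonnegative for all t ≥ 0. -/
/-!
The vector field of the model is quasi-positive: on a face `y i = 0` of the nonnegative orthant,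
`F y i ≥ 0`. If `F` is `K`-Lipschitz near both the state `x` and its positive part `x⁺`, then for
each `i` with `x i < 0` we get `F x⁺ i ≥ 0` and `|F x i - F x⁺ i| ≤ K ‖x⁻‖`, so the Lyapunov
function `V = ∑ i, (x i)⁻ ^ 2` satisfies `V' ≤ 2 K n V`. By Grönwall, `V` stays zero for a while
after any time at which the state is nonnegative, and real induction on `[0, t]` finishes. The
rabies field is smooth away from `M = -C`, a hyperplane that the orthant avoids because `C > 0`.
-/

open Filter Topology Set NNReal

theorem hasDerivAt_negPart_sq (x : ℝ) : HasDerivAt (fun y : ℝ => y⁻ ^ 2) (-2 * x⁻) x := by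
  -- `y ↦ -2 * y⁻` is 2-Lipschitz, so the first-order remainder is at most `(y - x) ^ 2`.
  rw [hasDerivAt_iff_isLittleO]
  refine Asymptotics.IsBigO.trans_isLittleO ?_ (Asymptotics.isLittleO_pow_sub_sub x one_lt_two)
  refine Asymptotics.IsBigO.of_bound 1 (Eventually.of_forall fun y => ?_)
  simp only [Real.norm_eq_abs, smul_eq_mul, one_mul, abs_pow, sq_abs, abs_le]
  rcases le_total y 0 with hy | hy <;> rcases le_total x 0 with hx | hx <;>
    simp only [negPart_eq_neg.2, negPart_eq_zero.2, hx, hy] <;> constructor <;> nlinarith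

section QuasiPositive

variable {ι : Type*} [Fintype ι]

def QuasiPositive (F : (ι → ℝ) → ι → ℝ) : Prop :=
  ∀ y, 0 ≤ y → ∀ i, y i = 0 → 0 ≤ F y i

theorem pi_norm_le_sum_of_nonneg {y : ι → ℝ} (hy : 0 ≤ y) : ‖y‖ ≤ ∑ i, y i :=
  (pi_norm_le_iff_of_nonneg (Finset.sum_nonneg fun i _ => hy i)).2 fun i => by
    rw [Real.norm_of_nonneg (hy i)]
    exact Finset.single_le_sum (fun j _ => hy j) (Finset.mem_univ i)

theorem sum_negPart_sq_nonpos_iff {y : ι → ℝ} : ∑ i, (y i)⁻ ^ 2 ≤ 0 ↔ 0 ≤ y := by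
  rw [(Finset.sum_nonneg fun i _ => sq_nonneg (y i)⁻).ge_iff_eq',
    Finset.sum_eq_zero_iff_of_nonneg fun i _ => sq_nonneg (y i)⁻]
  simp [Pi.le_def]

variable {F : (ι → ℝ) → ι → ℝ}

theorem QuasiPositive.neg_negPart_mul_le (hF : QuasiPositive F) {K : ℝ≥0} {s : Set (ι → ℝ)}
    (hK : LipschitzOnWith K F s) {x : ι → ℝ} (hx : x ∈ s) (hx' : x⁺ ∈ s) (i : ι) :
    -(x i)⁻ * F x i ≤ K * ‖x⁻‖ * (x i)⁻ := by
  rcases (negPart_nonneg (x i)).eq_or_lt with hi | hi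
  · simp [← hi]
  have hFi : 0 ≤ F x⁺ i := hF _ (posPart_nonneg x) i (by simpa using (negPart_pos_iff.1 hi).le)
  have hdiff : |F x⁺ i - F x i| ≤ K * ‖x⁻‖ :=
    calc |F x⁺ i - F x i| ≤ ‖F x⁺ - F x‖ := norm_le_pi_norm (F x⁺ - F x) i
      _ ≤ K * ‖x⁺ - x‖ := hK.norm_sub_le hx' hx
      _ = K * ‖x⁻‖ := by nth_rw 2 [← posPart_sub_negPart x]; rw [sub_sub_cancel]
  nlinarith [le_abs_self (F x⁺ i - F x i)]

theorem QuasiPositive.sum_neg_negPart_mul_le (hF : QuasiPositive F) {K : ℝ≥0}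
    {s : Set (ι → ℝ)} (hK : LipschitzOnWith K F s) {x : ι → ℝ} (hx : x ∈ s) (hx' : x⁺ ∈ s) :
    ∑ i, -(x i)⁻ * F x i ≤ K * Fintype.card ι * ∑ i, (x i)⁻ ^ 2 := by
  have hsum : 0 ≤ ∑ i, (x i)⁻ := Finset.sum_nonneg fun i _ => negPart_nonneg (x i)
  calc ∑ i, -(x i)⁻ * F x i ≤ ∑ i, K * ‖x⁻‖ * (x i)⁻ :=
        Finset.sum_le_sum fun i _ => hF.neg_negPart_mul_le hK hx hx' i
    _ = K * ‖x⁻‖ * ∑ i, (x i)⁻ := by rw [Finset.mul_sum]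
    _ ≤ K * (∑ i, (x i)⁻) ^ 2 := by
        rw [mul_assoc, sq]
        gcongr
        exact pi_norm_le_sum_of_nonneg (negPart_nonneg x)
    _ ≤ K * Fintype.card ι * ∑ i, (x i)⁻ ^ 2 := by
        rw [mul_assoc]
        gcongr
        exact sq_sum_le_card_mul_sum_sq

theorem QuasiPositive.exists_nonneg_Icc (hF : QuasiPositive F) {K : ℝ≥0} {s : Set (ι → ℝ)}
    (hK : LipschitzOnWith K F s) {x : ℝ → ι → ℝ} {a : ℝ} (hx : ∀ t ≥ a, HasDerivAt x (F (x t)) t)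
    (hs : s ∈ 𝓝 (x a)) (ha : 0 ≤ x a) : ∃ b > a, ∀ t ∈ Icc a b, 0 ≤ x t := by
  have hxa : ContinuousAt x a := (hx a le_rfl).continuousAt
  have hxa' : ContinuousAt (fun t => (x t)⁺) a :=
    continuousAt_pi.2 fun i => ((continuousAt_apply i _).comp hxa).max continuousAt_const
  obtain ⟨u, hau, hu⟩ := exists_Ico_subset_of_mem_nhds ((hxa.eventually_mem hs).and
    (hxa'.eventually_mem (by rwa [posPart_eq_self.2 ha]))) ⟨a + 1, by linarith⟩
  refine ⟨(a + u) / 2, by linarith, fun t ht => ?_⟩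
  set V : ℝ → ℝ := fun t => ∑ i, (x t i)⁻ ^ 2
  have hV : ∀ t ≥ a, HasDerivAt V (∑ i, -2 * (x t i)⁻ * F (x t) i) t := fun t ht =>
    HasDerivAt.fun_sum fun i _ => (hasDerivAt_negPart_sq _).comp t (hasDerivAt_pi.1 (hx t ht) i)
  have hbound : ∀ t ∈ Ico a ((a + u) / 2),
      ∑ i, -2 * (x t i)⁻ * F (x t) i ≤ 2 * K * Fintype.card ι * V t + 0 := fun t ht => by
    obtain ⟨hxt, hxt'⟩ := hu ⟨ht.1, by linarith [ht.2]⟩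
    calc ∑ i, -2 * (x t i)⁻ * F (x t) i = 2 * ∑ i, -(x t i)⁻ * F (x t) i := by
          rw [Finset.mul_sum]; congr 1; ext; ring
      _ ≤ 2 * (K * Fintype.card ι * V t) := by
          gcongr; exact hF.sum_neg_negPart_mul_le hK hxt hxt'
      _ = 2 * K * Fintype.card ι * V t + 0 := by ring
  have hVt := le_gronwallBound_of_liminf_deriv_right_le
    (fun t ht => (hV t ht.1).continuousAt.continuousWithinAt)
    (fun t ht r hr => (hV t ht.1).hasDerivWithinAt.liminf_right_slope_le hr)
    (sum_negPart_sq_nonpos_iff.2 ha) hbound t ht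
  rwa [gronwallBound_ε0_δ0, sum_negPart_sq_nonpos_iff] at hVt

theorem QuasiPositive.nonneg_of_hasDerivAt (hF : QuasiPositive F) {U : Set (ι → ℝ)}
    (hU : IsOpen U) (hFU : LocallyLipschitzOn U F) (hUpos : Ici 0 ⊆ U) {x : ℝ → ι → ℝ}
    (hx : ∀ t ≥ 0, HasDerivAt x (F (x t)) t) (h0 : 0 ≤ x 0) {t : ℝ} (ht : 0 ≤ t) :
    0 ≤ x t := by
  have hclosed : IsClosed ({s | 0 ≤ x s} ∩ Icc 0 t) := by
    rw [inter_comm]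
    exact ContinuousOn.preimage_isClosed_of_isClosed
      (fun s hs => (hx s hs.1).continuousAt.continuousWithinAt) isClosed_Icc isClosed_Ici
  refine hclosed.Icc_subset_of_forall_mem_nhdsWithin h0 (fun a ⟨ha, ha'⟩ => ?_) ⟨ht, le_rfl⟩
  obtain ⟨K, s, hs, hK⟩ := hFU (hUpos ha)
  rw [hU.nhdsWithin_eq (hUpos ha)] at hs
  obtain ⟨b, hab, hb⟩ := hF.exists_nonneg_Icc hK (fun s hs => hx s (ha'.1.trans hs)) hs ha
  exact mem_of_superset (Ioo_mem_nhdsGT hab) fun s hs => hb s (Ioo_subset_Icc_self hs)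

end QuasiPositive

structure RabiesParams where
  (th1 th2 th3 mu1 mu2 mu3 mu4 tau1 tau2 tau3 ka1 ka2 ka3 ps1 ps2 ps3 rh1 rh2 rh3 be1 be2 be3 ga
    ga1 ga2 ga3 si1 si2 si3 nu1 nu2 nu3 C u1 u2 u3 u4 : ℝ)

namespace RabiesParams

variable (p : RabiesParams)

/-- The state `y` lists `S_H, E_H, I_H, R_H, S_F, E_F, I_F, S_D, E_D, I_D, R_D, M` in this order. -/
noncomputable def field (y : Fin 12 → ℝ) : Fin 12 → ℝ :=
  ![p.th1 + p.be3 * y 3 - p.mu1 * y 0 - (1 - (p.u1 + p.u3)) *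
      (p.tau1 * y 6 + p.tau2 * y 9 + p.tau3 * (y 11 / (y 11 + p.C))) * y 0,
    (1 - (p.u1 + p.u3)) * (p.tau1 * y 6 + p.tau2 * y 9 + p.tau3 * (y 11 / (y 11 + p.C))) * y 0 -
      (p.mu1 + p.be1 + p.be2 + p.u4) * y 1,
    p.be1 * y 1 - (p.si1 + p.mu1) * y 2,
    (p.be2 + p.u4) * y 1 - (p.be3 + p.mu1) * y 3,
    p.th2 - (p.ka1 * y 6 + p.ka2 * y 9 + p.ka3 * (y 11 / (y 11 + p.C))) * y 4 - p.mu2 * y 4,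
    (p.ka1 * y 6 + p.ka2 * y 9 + p.ka3 * (y 11 / (y 11 + p.C))) * y 4 - (p.mu2 + p.ga) * y 5,
    p.ga * y 5 - (p.mu2 + p.si2) * y 6,
    p.th3 - p.mu3 * y 7 - (1 - (p.u1 + p.u2)) * (p.ps1 * y 6 / (1 + p.rh1) +
      p.ps2 * y 9 / (1 + p.rh2) + p.ps3 * (y 11 / (y 11 + p.C)) / (1 + p.rh3)) * y 7 +
      p.ga3 * y 10,
    (1 - (p.u1 + p.u2)) * (p.ps1 * y 6 / (1 + p.rh1) + p.ps2 * y 9 / (1 + p.rh2) +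
      p.ps3 * (y 11 / (y 11 + p.C)) / (1 + p.rh3)) * y 7 - (p.mu3 + p.ga1 + p.ga2 + p.u4) * y 8,
    p.ga1 * y 8 - (p.mu3 + p.si3) * y 9,
    (p.ga2 + p.u4) * y 8 - (p.mu3 + p.ga3) * y 10,
    p.nu1 * y 2 + p.nu2 * y 6 + p.nu3 * y 9 - p.mu4 * y 11]

theorem locallyLipschitzOn_field : LocallyLipschitzOn {y | -p.C < y 11} p.field := by
  refine ContDiffOn.locallyLipschitzOn
    (convex_halfSpace_gt (LinearMap.proj (R := ℝ) (φ := fun _ : Fin 12 => ℝ) 11).isLinear _) ?_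
  refine contDiffOn_pi.2 fun i => ?_
  fin_cases i <;>
    simp only [field, Fin.isValue, Fin.zero_eta, Fin.mk_one, Fin.reduceFinMk,
      Matrix.cons_val_zero, Matrix.cons_val_one, Matrix.cons_val] <;>
    fun_prop (disch := exact fun y (hy : -p.C < y 11) => by linarith)

theorem quasiPositive_field (hth1 : 0 ≤ p.th1) (hth2 : 0 ≤ p.th2) (hth3 : 0 ≤ p.th3)
    (htau1 : 0 ≤ p.tau1) (htau2 : 0 ≤ p.tau2) (htau3 : 0 ≤ p.tau3)
    (hka1 : 0 ≤ p.ka1) (hka2 : 0 ≤ p.ka2) (hka3 : 0 ≤ p.ka3)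
    (hps1 : 0 ≤ p.ps1) (hps2 : 0 ≤ p.ps2) (hps3 : 0 ≤ p.ps3)
    (hrh1 : 0 ≤ p.rh1) (hrh2 : 0 ≤ p.rh2) (hrh3 : 0 ≤ p.rh3)
    (hbe1 : 0 ≤ p.be1) (hbe2 : 0 ≤ p.be2) (hbe3 : 0 ≤ p.be3)
    (hga : 0 ≤ p.ga) (hga1 : 0 ≤ p.ga1) (hga2 : 0 ≤ p.ga2) (hga3 : 0 ≤ p.ga3)
    (hnu1 : 0 ≤ p.nu1) (hnu2 : 0 ≤ p.nu2) (hnu3 : 0 ≤ p.nu3) (hC : 0 < p.C)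
    (hu4 : 0 ≤ p.u4) (hu13 : p.u1 + p.u3 ≤ 1) (hu12 : p.u1 + p.u2 ≤ 1) :
    QuasiPositive p.field := by
  intro y hy i hi
  replace hy : ∀ j, 0 ≤ y j := hy
  have hH : 0 ≤ 1 - (p.u1 + p.u3) := sub_nonneg.2 hu13
  have hD : 0 ≤ 1 - (p.u1 + p.u2) := sub_nonneg.2 hu12
  fin_cases i <;>
    simp only [field, Fin.isValue, Fin.zero_eta, Fin.mk_one, Fin.reduceFinMk,
      Matrix.cons_val_zero, Matrix.cons_val_one, Matrix.cons_val] at hi ⊢ <;>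
    simp only [hi, mul_zero, sub_zero] <;>
    apply_rules [add_nonneg, div_nonneg, mul_nonneg, hy, zero_le_one, hC.le]

end RabiesParams

theorem rabies_positivity_general
    (th1 th2 th3 mu1 mu2 mu3 mu4 tau1 tau2 tau3 ka1 ka2 ka3 ps1 ps2 ps3 rh1 rh2 rh3 be1 be2 be3 ga ga1 ga2 ga3 si1 si2 si3 nu1 nu2 nu3 C u1 u2 u3 u4 : ℝ)
    (S_H E_H I_H R_H S_F E_F I_F S_D E_D I_D R_D M : ℝ → ℝ)
    (hpth1 : 0 ≤ th1)
    (hpth2 : 0 ≤ th2)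
    (hpth3 : 0 ≤ th3)
    (hptau1 : 0 ≤ tau1)
    (hptau2 : 0 ≤ tau2)
    (hptau3 : 0 ≤ tau3)
    (hpka1 : 0 ≤ ka1)
    (hpka2 : 0 ≤ ka2)
    (hpka3 : 0 ≤ ka3)
    (hpps1 : 0 ≤ ps1)
    (hpps2 : 0 ≤ ps2)
    (hpps3 : 0 ≤ ps3)
    (hprh1 : 0 ≤ rh1)
    (hprh2 : 0 ≤ rh2)
    (hprh3 : 0 ≤ rh3)
    (hpbe1 : 0 ≤ be1)
    (hpbe2 : 0 ≤ be2)
    (hpbe3 : 0 ≤ be3)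
    (hpga : 0 ≤ ga)
    (hpga1 : 0 ≤ ga1)
    (hpga2 : 0 ≤ ga2)
    (hpga3 : 0 ≤ ga3)
    (hpnu1 : 0 ≤ nu1)
    (hpnu2 : 0 ≤ nu2)
    (hpnu3 : 0 ≤ nu3)
    (hpC : 0 < C)
    (hu4 : u4 ∈ Set.Icc (0:ℝ) 1)
    (hu13 : u1 + u3 ≤ 1) (hu12 : u1 + u2 ≤ 1)
    (hodeS_H : ∀ t : ℝ, 0 ≤ t → HasDerivAt S_H (th1 + be3 * R_H t - mu1 * S_H t - (1 - (u1 + u3)) * (tau1 * I_F t + tau2 * I_D t + tau3 * (M t / (M t + C))) * S_H t) t)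
    (hodeE_H : ∀ t : ℝ, 0 ≤ t → HasDerivAt E_H ((1 - (u1 + u3)) * (tau1 * I_F t + tau2 * I_D t + tau3 * (M t / (M t + C))) * S_H t - (mu1 + be1 + be2 + u4) * E_H t) t)
    (hodeI_H : ∀ t : ℝ, 0 ≤ t → HasDerivAt I_H (be1 * E_H t - (si1 + mu1) * I_H t) t)
    (hodeR_H : ∀ t : ℝ, 0 ≤ t → HasDerivAt R_H ((be2 + u4) * E_H t - (be3 + mu1) * R_H t) t)
    (hodeS_F : ∀ t : ℝ, 0 ≤ t → HasDerivAt S_F (th2 - (ka1 * I_F t + ka2 * I_D t + ka3 * (M t / (M t + C))) * S_F t - mu2 * S_F t) t)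
    (hodeE_F : ∀ t : ℝ, 0 ≤ t → HasDerivAt E_F ((ka1 * I_F t + ka2 * I_D t + ka3 * (M t / (M t + C))) * S_F t - (mu2 + ga) * E_F t) t)
    (hodeI_F : ∀ t : ℝ, 0 ≤ t → HasDerivAt I_F (ga * E_F t - (mu2 + si2) * I_F t) t)
    (hodeS_D : ∀ t : ℝ, 0 ≤ t → HasDerivAt S_D (th3 - mu3 * S_D t - (1 - (u1 + u2)) * (ps1 * I_F t / (1 + rh1) + ps2 * I_D t / (1 + rh2) + ps3 * (M t / (M t + C)) / (1 + rh3)) * S_D t + ga3 * R_D t) t)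
    (hodeE_D : ∀ t : ℝ, 0 ≤ t → HasDerivAt E_D ((1 - (u1 + u2)) * (ps1 * I_F t / (1 + rh1) + ps2 * I_D t / (1 + rh2) + ps3 * (M t / (M t + C)) / (1 + rh3)) * S_D t - (mu3 + ga1 + ga2 + u4) * E_D t) t)
    (hodeI_D : ∀ t : ℝ, 0 ≤ t → HasDerivAt I_D (ga1 * E_D t - (mu3 + si3) * I_D t) t)
    (hodeR_D : ∀ t : ℝ, 0 ≤ t → HasDerivAt R_D ((ga2 + u4) * E_D t - (mu3 + ga3) * R_D t) t)
    (hodeM : ∀ t : ℝ, 0 ≤ t → HasDerivAt M (nu1 * I_H t + nu2 * I_F t + nu3 * I_D t - mu4 * M t) t)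
    (hinit : 0 ≤ S_H 0 ∧ 0 ≤ E_H 0 ∧ 0 ≤ I_H 0 ∧ 0 ≤ R_H 0 ∧ 0 ≤ S_F 0 ∧ 0 ≤ E_F 0 ∧ 0 ≤ I_F 0 ∧ 0 ≤ S_D 0 ∧ 0 ≤ E_D 0 ∧ 0 ≤ I_D 0 ∧ 0 ≤ R_D 0 ∧ 0 ≤ M 0) :
    ∀ t : ℝ, 0 ≤ t → (0 ≤ S_H t ∧ 0 ≤ E_H t ∧ 0 ≤ I_H t ∧ 0 ≤ R_H t ∧ 0 ≤ S_F t ∧ 0 ≤ E_F t ∧ 0 ≤ I_F t ∧ 0 ≤ S_D t ∧ 0 ≤ E_D t ∧ 0 ≤ I_D t ∧ 0 ≤ R_D t ∧ 0 ≤ M t) := by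
  intro t ht
  let p : RabiesParams := ⟨th1, th2, th3, mu1, mu2, mu3, mu4, tau1, tau2, tau3, ka1, ka2, ka3, ps1,
    ps2, ps3, rh1, rh2, rh3, be1, be2, be3, ga, ga1, ga2, ga3, si1, si2, si3, nu1, nu2, nu3, C, u1,
    u2, u3, u4⟩
  let x : ℝ → Fin 12 → ℝ := fun t =>
    ![S_H t, E_H t, I_H t, R_H t, S_F t, E_F t, I_F t, S_D t, E_D t, I_D t, R_D t, M t]
  have hx : ∀ t ≥ 0, HasDerivAt x (p.field (x t)) t := fun t ht => hasDerivAt_pi.2 fun i => by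
    fin_cases i
    exacts [hodeS_H t ht, hodeE_H t ht, hodeI_H t ht, hodeR_H t ht, hodeS_F t ht, hodeE_F t ht,
      hodeI_F t ht, hodeS_D t ht, hodeE_D t ht, hodeI_D t ht, hodeR_D t ht, hodeM t ht]
  have h0 : 0 ≤ x 0 := by
    obtain ⟨h1, h2, h3, h4, h5, h6, h7, h8, h9, h10, h11, h12⟩ := hinit
    intro i
    fin_cases i <;> assumption
  have hpos := (p.quasiPositive_field hpth1 hpth2 hpth3 hptau1 hptau2 hptau3 hpka1 hpka2 hpka3
    hpps1 hpps2 hpps3 hprh1 hprh2 hprh3 hpbe1 hpbe2 hpbe3 hpga hpga1 hpga2 hpga3 hpnu1 hpnu2 hpnu3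
    hpC hu4.1 hu13 hu12).nonneg_of_hasDerivAt (isOpen_lt continuous_const (continuous_apply 11))
    p.locallyLipschitzOn_field (fun y hy => (neg_neg_of_pos hpC).trans_le (hy 11)) hx h0 ht
  exact ⟨hpos 0, hpos 1, hpos 2, hpos 3, hpos 4, hpos 5, hpos 6, hpos 7, hpos 8, hpos 9, hpos 10,
    hpos 11⟩

/-- Positivity of solutions of the rabies model (Lemma 1 / well-posedness):
if all parameters are nonnegative, `C > 0`, the constant controls lie in `[0,1]`
with `u1+u3 ≤ 1` and `u1+u2 ≤ 1`, and a differentiable solution of the system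
has nonnegative components at `t = 0`, then all twelve components stay
nonnegative for all `t ≥ 0`. -/
theorem rabies_positivity
    (th1 th2 th3 mu1 mu2 mu3 mu4 tau1 tau2 tau3 ka1 ka2 ka3 ps1 ps2 ps3 rh1 rh2 rh3 be1 be2 be3 ga ga1 ga2 ga3 si1 si2 si3 nu1 nu2 nu3 C u1 u2 u3 u4 : ℝ)
    (S_H E_H I_H R_H S_F E_F I_F S_D E_D I_D R_D M : ℝ → ℝ)
    (hpth1 : 0 ≤ th1)
    (hpth2 : 0 ≤ th2)
    (hpth3 : 0 ≤ th3)
    (hpmu1 : 0 ≤ mu1)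
    (hpmu2 : 0 ≤ mu2)
    (hpmu3 : 0 ≤ mu3)
    (hpmu4 : 0 ≤ mu4)
    (hptau1 : 0 ≤ tau1)
    (hptau2 : 0 ≤ tau2)
    (hptau3 : 0 ≤ tau3)
    (hpka1 : 0 ≤ ka1)
    (hpka2 : 0 ≤ ka2)
    (hpka3 : 0 ≤ ka3)
    (hpps1 : 0 ≤ ps1)
    (hpps2 : 0 ≤ ps2)
    (hpps3 : 0 ≤ ps3)
    (hprh1 : 0 ≤ rh1)
    (hprh2 : 0 ≤ rh2)
    (hprh3 : 0 ≤ rh3)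
    (hpbe1 : 0 ≤ be1)
    (hpbe2 : 0 ≤ be2)
    (hpbe3 : 0 ≤ be3)
    (hpga : 0 ≤ ga)
    (hpga1 : 0 ≤ ga1)
    (hpga2 : 0 ≤ ga2)
    (hpga3 : 0 ≤ ga3)
    (hpsi1 : 0 ≤ si1)
    (hpsi2 : 0 ≤ si2)
    (hpsi3 : 0 ≤ si3)
    (hpnu1 : 0 ≤ nu1)
    (hpnu2 : 0 ≤ nu2)
    (hpnu3 : 0 ≤ nu3)
    (hpC : 0 < C)
    (hu1 : u1 ∈ Set.Icc (0:ℝ) 1) (hu2 : u2 ∈ Set.Icc (0:ℝ) 1)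
    (hu3 : u3 ∈ Set.Icc (0:ℝ) 1) (hu4 : u4 ∈ Set.Icc (0:ℝ) 1)
    (hu13 : u1 + u3 ≤ 1) (hu12 : u1 + u2 ≤ 1)
    (hodeS_H : ∀ t : ℝ, 0 ≤ t → HasDerivAt S_H (th1 + be3 * R_H t - mu1 * S_H t - (1 - (u1 + u3)) * (tau1 * I_F t + tau2 * I_D t + tau3 * (M t / (M t + C))) * S_H t) t)
    (hodeE_H : ∀ t : ℝ, 0 ≤ t → HasDerivAt E_H ((1 - (u1 + u3)) * (tau1 * I_F t + tau2 * I_D t + tau3 * (M t / (M t + C))) * S_H t - (mu1 + be1 + be2 + u4) * E_H t) t)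
    (hodeI_H : ∀ t : ℝ, 0 ≤ t → HasDerivAt I_H (be1 * E_H t - (si1 + mu1) * I_H t) t)
    (hodeR_H : ∀ t : ℝ, 0 ≤ t → HasDerivAt R_H ((be2 + u4) * E_H t - (be3 + mu1) * R_H t) t)
    (hodeS_F : ∀ t : ℝ, 0 ≤ t → HasDerivAt S_F (th2 - (ka1 * I_F t + ka2 * I_D t + ka3 * (M t / (M t + C))) * S_F t - mu2 * S_F t) t)
    (hodeE_F : ∀ t : ℝ, 0 ≤ t → HasDerivAt E_F ((ka1 * I_F t + ka2 * I_D t + ka3 * (M t / (M t + C))) * S_F t - (mu2 + ga) * E_F t) t)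
    (hodeI_F : ∀ t : ℝ, 0 ≤ t → HasDerivAt I_F (ga * E_F t - (mu2 + si2) * I_F t) t)
    (hodeS_D : ∀ t : ℝ, 0 ≤ t → HasDerivAt S_D (th3 - mu3 * S_D t - (1 - (u1 + u2)) * (ps1 * I_F t / (1 + rh1) + ps2 * I_D t / (1 + rh2) + ps3 * (M t / (M t + C)) / (1 + rh3)) * S_D t + ga3 * R_D t) t)
    (hodeE_D : ∀ t : ℝ, 0 ≤ t → HasDerivAt E_D ((1 - (u1 + u2)) * (ps1 * I_F t / (1 + rh1) + ps2 * I_D t / (1 + rh2) + ps3 * (M t / (M t + C)) / (1 + rh3)) * S_D t - (mu3 + ga1 + ga2 + u4) * E_D t) t)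
    (hodeI_D : ∀ t : ℝ, 0 ≤ t → HasDerivAt I_D (ga1 * E_D t - (mu3 + si3) * I_D t) t)
    (hodeR_D : ∀ t : ℝ, 0 ≤ t → HasDerivAt R_D ((ga2 + u4) * E_D t - (mu3 + ga3) * R_D t) t)
    (hodeM : ∀ t : ℝ, 0 ≤ t → HasDerivAt M (nu1 * I_H t + nu2 * I_F t + nu3 * I_D t - mu4 * M t) t)
    (hinit : 0 ≤ S_H 0 ∧ 0 ≤ E_H 0 ∧ 0 ≤ I_H 0 ∧ 0 ≤ R_H 0 ∧ 0 ≤ S_F 0 ∧ 0 ≤ E_F 0 ∧ 0 ≤ I_F 0 ∧ 0 ≤ S_D 0 ∧ 0 ≤ E_D 0 ∧ 0 ≤ I_D 0 ∧ 0 ≤ R_D 0 ∧ 0 ≤ M 0) :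
    ∀ t : ℝ, 0 ≤ t → (0 ≤ S_H t ∧ 0 ≤ E_H t ∧ 0 ≤ I_H t ∧ 0 ≤ R_H t ∧ 0 ≤ S_F t ∧ 0 ≤ E_F t ∧ 0 ≤ I_F t ∧ 0 ≤ S_D t ∧ 0 ≤ E_D t ∧ 0 ≤ I_D t ∧ 0 ≤ R_D t ∧ 0 ≤ M t) :=
  rabies_positivity_general th1 th2 th3 mu1 mu2 mu3 mu4 tau1 tau2 tau3 ka1 ka2 ka3 ps1 ps2 ps3 rh1
    rh2 rh3 be1 be2 be3 ga ga1 ga2 ga3 si1 si2 si3 nu1 nu2 nu3 C u1 u2 u3 u4 S_H E_H I_H R_H S_F E_F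
    I_F S_D E_D I_D R_D M hpth1 hpth2 hpth3 hptau1 hptau2 hptau3 hpka1 hpka2 hpka3 hpps1 hpps2 hpps3
    hprh1 hprh2 hprh3 hpbe1 hpbe2 hpbe3 hpga hpga1 hpga2 hpga3 hpnu1 hpnu2 hpnu3 hpC hu4 hu13 hu12
    hodeS_H hodeE_H hodeI_H hodeR_H hodeS_F hodeE_F hodeI_F hodeS_D hodeE_D hodeI_D hodeR_D hodeM
    hinit
end

section
/- Fix positive parameters κ1, κ2, ψ1, ψ2, θ2, θ3, γ, γ1, γ2, σ2, σ3, μ2, μ3 and ρ1, ρ2 ≥ 0. For (u1,u2,u4) with u1,u2,u4 ≥ 0 and u1+u2 ≤ 1, define R21 = κ1·θ2·γ/(μ2·(μ2+γ)·(σ2+μ2)), a3(u4) = γ/((μ3+γ1+γ2+u4)·(σ3+μ3)), R23(u4) = κ2·θ2·a3(u4)/μ2, R31(u1,u2) = (1−u1−u2)·ψ1·θ3·γ/((1+ρ1)·μ3·(μ2+γ)·(σ2+μ2)), R33(u1,u2,u4) = (1−u1−u2)·ψ2·θ3·a3(u4)/((1+ρ2)·μ3), and R_e = (R33+R21+√((R21−R33)²+4·R31·R23))/2.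 Then R_e is nonincreasing in each of u1, u2, and u4: if u1' ≥ u1, u2' ≥ u2, u4' ≥ u4 (with u1'+u2' ≤ 1), then R_e(u1',u2',u4') ≤ R_e(u1,u2,u4). -/
lemma key_sqrt_mono (a b b' c c' : ℝ) (hb : b' ≤ b) (hc : c' ≤ c) (hc' : 0 ≤ c') :
    (b' + a + Real.sqrt ((a - b') ^ 2 + c')) / 2
      ≤ (b + a + Real.sqrt ((a - b) ^ 2 + c)) / 2 := by
  have hc0 : 0 ≤ c := le_trans hc' hc
  set s := Real.sqrt ((a - b) ^ 2 + c) with hs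
  have hs0 : 0 ≤ s := Real.sqrt_nonneg _
  have hsq : s ^ 2 = (a - b) ^ 2 + c := Real.sq_sqrt (by positivity)
  have hab : a - b ≤ s := by
    calc a - b ≤ |a - b| := le_abs_self _
      _ = Real.sqrt ((a - b) ^ 2) := (Real.sqrt_sq_eq_abs _).symm
      _ ≤ s := Real.sqrt_le_sqrt (by linarith)
  have key2 : (a - b') ^ 2 + c' ≤ ((b - b') + s) ^ 2 := by
    nlinarith [mul_nonneg (sub_nonneg.mpr hb) (sub_nonneg.mpr hab)]
  have h1 : Real.sqrt ((a - b') ^ 2 + c') ≤ (b - b') + s := by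
    calc Real.sqrt ((a - b') ^ 2 + c') ≤ Real.sqrt (((b - b') + s) ^ 2) :=
          Real.sqrt_le_sqrt key2
      _ = (b - b') + s := Real.sqrt_sq (by linarith)
  linarith

/-- The effective reproduction number `R_e` of the rabies model is
nonincreasing in each of the controls `u1` (health promotion), `u2`
(vaccination of domestic dogs) and `u4` (post-exposure treatment). -/
theorem rabies_Re_antitone_in_controls
    (ka1 ka2 ps1 ps2 th2 th3 ga ga1 ga2 si2 si3 mu2 mu3 rh1 rh2 : ℝ)
    (hka1 : 0 < ka1) (hka2 : 0 < ka2) (hps1 : 0 < ps1) (hps2 : 0 < ps2)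
    (hth2 : 0 < th2) (hth3 : 0 < th3) (hga : 0 < ga) (hga1 : 0 < ga1)
    (hga2 : 0 < ga2) (hsi2 : 0 < si2) (hsi3 : 0 < si3)
    (hmu2 : 0 < mu2) (hmu3 : 0 < mu3) (hrh1 : 0 ≤ rh1) (hrh2 : 0 ≤ rh2)
    (u1 u2 u4 u1' u2' u4' : ℝ)
    (hu1 : 0 ≤ u1) (hu2 : 0 ≤ u2) (hu4 : 0 ≤ u4)
    (hu12 : u1 + u2 ≤ 1) (hu12' : u1' + u2' ≤ 1)
    (h1 : u1 ≤ u1') (h2 : u2 ≤ u2') (h4 : u4 ≤ u4') :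
    let Re : ℝ → ℝ → ℝ → ℝ := fun v1 v2 v4 =>
      let R21 := ka1 * th2 * ga / (mu2 * (mu2 + ga) * (si2 + mu2))
      let a3 := ga / ((mu3 + ga1 + ga2 + v4) * (si3 + mu3))
      let R23 := ka2 * th2 * a3 / mu2
      let R31 := (1 - v1 - v2) * ps1 * th3 * ga
        / ((1 + rh1) * mu3 * (mu2 + ga) * (si2 + mu2))
      let R33 := (1 - v1 - v2) * ps2 * th3 * a3 / ((1 + rh2) * mu3)
      (R33 + R21 + Real.sqrt ((R21 - R33) ^ 2 + 4 * R31 * R23)) / 2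
    Re u1' u2' u4' ≤ Re u1 u2 u4 := by
  intro Re
  have hu4' : 0 ≤ u4' := le_trans hu4 h4
  have hw' : 0 ≤ 1 - u1' - u2' := by linarith
  have hw : 0 ≤ 1 - u1 - u2 := by linarith
  have hwle : 1 - u1' - u2' ≤ 1 - u1 - u2 := by linarith
  have hd : 0 < (mu3 + ga1 + ga2 + u4) * (si3 + mu3) :=
    mul_pos (by linarith) (by linarith)
  have hd' : 0 < (mu3 + ga1 + ga2 + u4') * (si3 + mu3) :=
    mul_pos (by linarith) (by linarith)
  have ha3' : 0 ≤ ga / ((mu3 + ga1 + ga2 + u4') * (si3 + mu3)) := by positivity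
  have ha3le : ga / ((mu3 + ga1 + ga2 + u4') * (si3 + mu3))
      ≤ ga / ((mu3 + ga1 + ga2 + u4) * (si3 + mu3)) := by
    apply div_le_div_of_nonneg_left hga.le hd
    apply mul_le_mul_of_nonneg_right (by linarith) (by linarith)
  have hden2 : 0 < (1 + rh2) * mu3 := mul_pos (by linarith) hmu3
  have hden1 : 0 < (1 + rh1) * mu3 * (mu2 + ga) * (si2 + mu2) := by
    have : 0 < (1 + rh1) := by linarith
    positivity
  show (_ + _ + Real.sqrt _) / 2 ≤ (_ + _ + Real.sqrt _) / 2
  apply key_sqrt_mono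
  · -- R33' ≤ R33
    apply div_le_div_of_nonneg_right ?_ hden2.le |>.trans_eq rfl
    · apply mul_le_mul ?_ ha3le ha3' (by positivity)
      exact mul_le_mul_of_nonneg_right
        (mul_le_mul_of_nonneg_right hwle hps2.le) hth3.le
  · -- 4*R31'*R23' ≤ 4*R31*R23
    have hR31le : (1 - u1' - u2') * ps1 * th3 * ga
          / ((1 + rh1) * mu3 * (mu2 + ga) * (si2 + mu2))
        ≤ (1 - u1 - u2) * ps1 * th3 * ga
          / ((1 + rh1) * mu3 * (mu2 + ga) * (si2 + mu2)) := by
      apply div_le_div_of_nonneg_right ?_ hden1.le |>.trans_eq rfl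
      exact mul_le_mul_of_nonneg_right (mul_le_mul_of_nonneg_right
        (mul_le_mul_of_nonneg_right hwle hps1.le) hth3.le) hga.le
    have hR23le : ka2 * th2 * (ga / ((mu3 + ga1 + ga2 + u4') * (si3 + mu3))) / mu2
        ≤ ka2 * th2 * (ga / ((mu3 + ga1 + ga2 + u4) * (si3 + mu3))) / mu2 := by
      apply div_le_div_of_nonneg_right ?_ hmu2.le |>.trans_eq rfl
      exact mul_le_mul_of_nonneg_left ha3le (by positivity)
    have hR31' : 0 ≤ (1 - u1' - u2') * ps1 * th3 * ga
        / ((1 + rh1) * mu3 * (mu2 + ga) * (si2 + mu2)) := by positivity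
    have hR23 : 0 ≤ ka2 * th2 * (ga / ((mu3 + ga1 + ga2 + u4) * (si3 + mu3))) / mu2 := by
      positivity
    have hR23' : 0 ≤ ka2 * th2 * (ga / ((mu3 + ga1 + ga2 + u4') * (si3 + mu3))) / mu2 := by
      positivity
    have := mul_le_mul hR31le hR23le hR23' (le_trans hR31' hR31le)
    linarith
  · -- 0 ≤ 4*R31'*R23'
    positivity
end

section
/- Fix positive parameters κ1, κ2, θ2, θ3, γ, γ1, γ2, σ2, σ3, μ2, μ3, u4 ≥ 0, ρ1, ρ2 ≥ 0, and 0 ≤ u1+u2 ≤ 1. For ψ1, ψ2 ≥ 0 define R21 = κ1·θ2·γ/(μ2·(μ2+γ)·(σ2+μ2)), a3 = γ/((μ3+γ1+γ2+u4)·(σ3+μ3)), R23 = κ2·θ2·a3/μ2, R31(ψ1) = (1−u1−u2)·ψ1·θ3·γ/((1+ρ1)·μ3·(μ2+γ)·(σ2+μ2)), R33(ψ2) = (1−u1−u2)·ψ2·θ3·a3/((1+ρ2)·μ3), and R_e = (R33+R21+√((R21−R33)²+4·R31·R23))/2. Then R_e is nondecreasing in each of ψ1 and ψ2: if ψ1'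 ≥ ψ1 and ψ2' ≥ ψ2, then R_e(ψ1',ψ2') ≥ R_e(ψ1,ψ2). -/
lemma rabies_aux (a b b' c c' : ℝ) (hb : b ≤ b') (hc : 0 ≤ c) (hcc : c ≤ c') :
    (b + a + Real.sqrt ((a - b) ^ 2 + c)) / 2
      ≤ (b' + a + Real.sqrt ((a - b') ^ 2 + c')) / 2 := by
  have hc' : (0:ℝ) ≤ c' := hc.trans hcc
  have hY : (0:ℝ) ≤ (a - b') ^ 2 + c' := by positivity
  have hs := Real.sq_sqrt hY
  have hsn := Real.sqrt_nonneg ((a - b') ^ 2 + c')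
  have habs : a - b' ≤ Real.sqrt ((a - b') ^ 2 + c') := by
    calc a - b' ≤ |a - b'| := le_abs_self _
      _ = Real.sqrt ((a - b') ^ 2) := (Real.sqrt_sq_eq_abs _).symm
      _ ≤ _ := Real.sqrt_le_sqrt (by linarith)
  have key : Real.sqrt ((a - b) ^ 2 + c)
      ≤ (b' - b) + Real.sqrt ((a - b') ^ 2 + c') := by
    have hsq : (a - b) ^ 2 + c
        ≤ ((b' - b) + Real.sqrt ((a - b') ^ 2 + c')) ^ 2 := by
      nlinarith
    calc Real.sqrt ((a - b) ^ 2 + c)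
        ≤ Real.sqrt (((b' - b) + Real.sqrt ((a - b') ^ 2 + c')) ^ 2) :=
          Real.sqrt_le_sqrt hsq
      _ = (b' - b) + Real.sqrt ((a - b') ^ 2 + c') :=
          Real.sqrt_sq (by linarith)
  linarith

/-- The effective reproduction number `R_e` of the rabies model is
nondecreasing in each of the domestic-dog contact rates `ψ1` and `ψ2`. -/
theorem rabies_Re_monotone_in_contact_rates
    (ka1 ka2 th2 th3 ga ga1 ga2 si2 si3 mu2 mu3 u4 rh1 rh2 u1 u2 : ℝ)
    (hka1 : 0 < ka1) (hka2 : 0 < ka2)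
    (hth2 : 0 < th2) (hth3 : 0 < th3) (hga : 0 < ga) (hga1 : 0 < ga1)
    (hga2 : 0 < ga2) (hsi2 : 0 < si2) (hsi3 : 0 < si3)
    (hmu2 : 0 < mu2) (hmu3 : 0 < mu3) (hu4 : 0 ≤ u4)
    (hrh1 : 0 ≤ rh1) (hrh2 : 0 ≤ rh2)
    (hu12nonneg : 0 ≤ u1 + u2) (hu12 : u1 + u2 ≤ 1)
    (ps1 ps2 ps1' ps2' : ℝ)
    (hps1 : 0 ≤ ps1) (hps2 : 0 ≤ ps2)
    (h1 : ps1 ≤ ps1') (h2 : ps2 ≤ ps2') :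
    let Re : ℝ → ℝ → ℝ := fun p1 p2 =>
      let R21 := ka1 * th2 * ga / (mu2 * (mu2 + ga) * (si2 + mu2))
      let a3 := ga / ((mu3 + ga1 + ga2 + u4) * (si3 + mu3))
      let R23 := ka2 * th2 * a3 / mu2
      let R31 := (1 - u1 - u2) * p1 * th3 * ga
        / ((1 + rh1) * mu3 * (mu2 + ga) * (si2 + mu2))
      let R33 := (1 - u1 - u2) * p2 * th3 * a3 / ((1 + rh2) * mu3)
      (R33 + R21 + Real.sqrt ((R21 - R33) ^ 2 + 4 * R31 * R23)) / 2
    Re ps1 ps2 ≤ Re ps1' ps2' := by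
  intro Re
  simp only [Re]
  have hu : (0:ℝ) ≤ 1 - u1 - u2 := by linarith
  have ha3 : 0 < ga / ((mu3 + ga1 + ga2 + u4) * (si3 + mu3)) := by positivity
  set a3 := ga / ((mu3 + ga1 + ga2 + u4) * (si3 + mu3)) with ha3def
  have hR23 : 0 < ka2 * th2 * a3 / mu2 := by positivity
  set R23 := ka2 * th2 * a3 / mu2 with hR23def
  have hden1 : (0:ℝ) < (1 + rh1) * mu3 * (mu2 + ga) * (si2 + mu2) := by positivity
  have hden2 : (0:ℝ) < (1 + rh2) * mu3 := by positivity
  apply rabies_aux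
  · gcongr
  · positivity
  · gcongr
end
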